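/- arXiv:cs/0604097 — 2 statements merged into one kernel-verified Lean document; each statement's English description precedes it below -/
import Mathlib

section
/- Let {u_i}_{i=1}^n and {v_i}_{i=1}^n be families of vectors in ℝ^n with ⟨u_i, v_k⟩ = δ_{ik} for all i, k, such that every coordinate lies in the support of at most K of the v_i, and ‖v_i‖_∞ ≤ C for all i. Let 1 ≤ p < ∞, ρ > 0, f ∈ ℝ^n, and let z ∈ ℝ^n be B-sparse with ‖f − Σ_i z_i v_i‖_p ≤ E. Then there exists a B-sparse y ∈ ℝ^n such that: (i) every y_i is an integer multiple of ρ; (ii) |y_i − ⟨f, u_i⟩| ≤ ‖u_i‖₁ · E + ρ for every i; and (iii) ‖f − Σ_i y_i v_i‖_p ≤ E + n^{1/p} · K · ρ · C. -/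
/-- Standard inner product on `ℝ^n`. -/
noncomputable def dotp {n : ℕ} (x y : Fin n → ℝ) : ℝ := ∑ j, x j * y j

/-- The `ℓ₁` norm on `ℝ^n`. -/
noncomputable def l1Norm {n : ℕ} (x : Fin n → ℝ) : ℝ := ∑ j, |x j|

/-- The `ℓ_p` norm on `ℝ^n` for a real exponent `1 ≤ p < ∞`. -/
noncomputable def lpNorm {n : ℕ} (p : ℝ) (x : Fin n → ℝ) : ℝ :=
  (∑ j, |x j| ^ p) ^ (1 / p)

/-- A vector is `B`-sparse if it has at most `B` nonzero components. -/
def Sparse {n : ℕ} (B : ℕ) (z : Fin n → ℝ) : Prop :=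
  ({i | z i ≠ 0} : Set (Fin n)).ncard ≤ B

/-! Round the coefficients of the sparse approximation `z` to the grid `ρℤ`; rounding keeps zeros,
so `y` stays `B`-sparse and moves each coefficient by at most `ρ`. By biorthogonality
`⟨f, u_i⟩ = z_i + ⟨f − Σ z_k v_k, u_i⟩`, and the residual is bounded coordinatewise by its `ℓ_p`
norm `E`, which gives (ii). For (iii), in each coordinate at most `K` of the `v_i` are nonzero, so
the rounding moves `Σ y_i v_i` by at most `KρC` there; Minkowski's inequality finishes. -/

open Finset

section LpNorm

variable {n : ℕ} {p : ℝ}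

lemma abs_le_lpNorm (hp : 0 < p) (x : Fin n → ℝ) (j : Fin n) : |x j| ≤ lpNorm p x := by
  calc |x j| = (|x j| ^ p) ^ (1 / p) := by
        rw [one_div, Real.rpow_rpow_inv (abs_nonneg _) hp.ne']
    _ ≤ lpNorm p x :=
        Real.rpow_le_rpow (by positivity)
          (single_le_sum (f := fun k => |x k| ^ p) (fun k _ => by positivity) (mem_univ j))
          (by positivity)

lemma lpNorm_add_le (hp : 1 ≤ p) (x y : Fin n → ℝ) :
    lpNorm p (x + y) ≤ lpNorm p x + lpNorm p y :=
  Real.Lp_add_le univ x y hp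

lemma lpNorm_le_of_forall_abs_le (hp : 0 < p) {x : Fin n → ℝ} {c : ℝ}
    (hx : ∀ j, |x j| ≤ c) : lpNorm p x ≤ (n : ℝ) ^ (1 / p) * c := by
  rcases n.eq_zero_or_pos with rfl | hn
  · simp [lpNorm, Real.zero_rpow (inv_pos.2 hp).ne']
  have hc : 0 ≤ c := (abs_nonneg _).trans (hx ⟨0, hn⟩)
  calc lpNorm p x ≤ (∑ _j : Fin n, c ^ p) ^ (1 / p) :=
        Real.rpow_le_rpow (by positivity)
          (sum_le_sum fun j _ => Real.rpow_le_rpow (abs_nonneg _) (hx j) hp.le) (by positivity)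
    _ = (n : ℝ) ^ (1 / p) * c := by
        rw [sum_const, card_univ, Fintype.card_fin, nsmul_eq_mul,
          Real.mul_rpow (Nat.cast_nonneg n) (by positivity), one_div,
          Real.rpow_rpow_inv hc hp.ne']

end LpNorm

lemma abs_dotp_le_l1Norm_mul {n : ℕ} {x : Fin n → ℝ} {E : ℝ} (hx : ∀ j, |x j| ≤ E)
    (w : Fin n → ℝ) : |dotp x w| ≤ l1Norm w * E :=
  calc |dotp x w| ≤ ∑ j, |x j * w j| := abs_sum_le_sum_abs _ _
    _ ≤ ∑ j, |w j| * E := sum_le_sum fun j _ => by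
        rw [abs_mul, mul_comm]
        exact mul_le_mul_of_nonneg_left (hx j) (abs_nonneg _)
    _ = l1Norm w * E := by rw [l1Norm, sum_mul]

lemma dotp_eq_dotp_residual_add {n : ℕ} {u v : Fin n → Fin n → ℝ}
    (hbi : ∀ i k, dotp (u i) (v k) = if i = k then (1 : ℝ) else 0) (f z : Fin n → ℝ) (i : Fin n) :
    dotp f (u i) = dotp (fun j => f j - ∑ k, z k * v k j) (u i) + z i := by
  have hsynth : ∑ j, (∑ k, z k * v k j) * u i j = z i :=
    calc ∑ j, (∑ k, z k * v k j) * u i j = ∑ k, z k * dotp (u i) (v k) := by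
          simp_rw [sum_mul, dotp, mul_sum]
          rw [sum_comm]
          exact sum_congr rfl fun k _ => sum_congr rfl fun j _ => by ring
      _ = z i := by simp [hbi]
  simp only [dotp, sub_mul, sum_sub_distrib, hsynth]
  ring

lemma abs_sum_mul_le_of_ncard_support_le {ι : Type*} [Fintype ι] {c w : ι → ℝ} {ρ C : ℝ}
    {K : ℕ} (hc : ∀ i, |c i| ≤ ρ) (hw : ∀ i, |w i| ≤ C) (hK : {i | w i ≠ 0}.ncard ≤ K)
    (hρ : 0 ≤ ρ) (hC : 0 ≤ C) : |∑ i, c i * w i| ≤ K * ρ * C := by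
  classical
  set S := univ.filter fun i => w i ≠ 0
  have hS : (S.card : ℝ) ≤ K := by
    have hSset : (S : Set ι) = {i | w i ≠ 0} := by ext; simp [S]
    rw [← Set.ncard_coe_finset, hSset]
    exact_mod_cast hK
  calc |∑ i, c i * w i| = |∑ i ∈ S, c i * w i| := by
        rw [sum_filter_of_ne fun i _ h => right_ne_zero_of_mul h]
    _ ≤ ∑ i ∈ S, |c i| * |w i| := by
        simpa only [abs_mul] using abs_sum_le_sum_abs (fun i => c i * w i) S
    _ ≤ ∑ _i ∈ S, ρ * C := sum_le_sum fun i _ => mul_le_mul (hc i) (hw i) (abs_nonneg _) hρ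
    _ = S.card * (ρ * C) := by rw [sum_const, nsmul_eq_mul]
    _ ≤ K * (ρ * C) := by gcongr
    _ = K * ρ * C := by ring

lemma abs_round_div_mul_sub_le {ρ : ℝ} (hρ : 0 < ρ) (x : ℝ) :
    |round (x / ρ) * ρ - x| ≤ ρ / 2 := by
  have h : round (x / ρ) * ρ - x = -(x / ρ - round (x / ρ)) * ρ := by field_simp; ring
  rw [h, abs_mul, abs_neg, abs_of_pos hρ]
  nlinarith [abs_sub_round (x / ρ)]

lemma Sparse.of_support_subset {n B : ℕ} {z y : Fin n → ℝ} (hz : Sparse B z)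
    (hyz : Function.support y ⊆ Function.support z) : Sparse B y :=
  (Set.ncard_le_ncard hyz).trans hz

/-- let `{u_i}`, `{v_i}` be biorthogonal families (`⟨u_i, v_k⟩ = δ_{ik}`)
such that every coordinate lies in the support of at most `K` of the `v_i`, with
`‖v_i‖_∞ ≤ C`.  Let `1 ≤ p < ∞`, `ρ > 0`, `f ∈ ℝ^n`, and let `z` be `B`-sparse with
`‖f − Σ_i z_i v_i‖_p ≤ E`.  Then there is a `B`-sparse `y` with: (i) every `y_i` an
integer multiple of `ρ`; (ii) `|y_i − ⟨f, u_i⟩| ≤ ‖u_i‖₁·E + ρ` for all `i`; and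
(iii) `‖f − Σ_i y_i v_i‖_p ≤ E + n^{1/p}·K·ρ·C`. -/
theorem stmt13 {n B K : ℕ} (u v : Fin n → Fin n → ℝ)
    (hbi : ∀ i k, dotp (u i) (v k) = if i = k then (1 : ℝ) else 0)
    (hK : ∀ j : Fin n, ({i | v i j ≠ 0} : Set (Fin n)).ncard ≤ K)
    (C : ℝ) (hC : ∀ i, (⨆ j, |v i j|) ≤ C)
    (p : ℝ) (hp : 1 ≤ p) (ρ : ℝ) (hρ : 0 < ρ)
    (f z : Fin n → ℝ) (hz : Sparse B z) (E : ℝ)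
    (hE : lpNorm p (fun j => f j - ∑ i, z i * v i j) ≤ E) :
    ∃ y : Fin n → ℝ, Sparse B y ∧
      (∀ i, ∃ m : ℤ, y i = m * ρ) ∧
      (∀ i, |y i - dotp f (u i)| ≤ l1Norm (u i) * E + ρ) ∧
      lpNorm p (fun j => f j - ∑ i, y i * v i j) ≤
        E + (n : ℝ) ^ (1 / p) * K * ρ * C := by
  have hp0 : 0 < p := zero_lt_one.trans_le hp
  have hv : ∀ i j, |v i j| ≤ C := fun i j =>
    (le_ciSup (Finite.bddAbove_range fun j => |v i j|) j).trans (hC i)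
  set r : Fin n → ℝ := fun j => f j - ∑ i, z i * v i j
  have hr : ∀ j, |r j| ≤ E := fun j => (abs_le_lpNorm hp0 r j).trans hE
  set y : Fin n → ℝ := fun i => round (z i / ρ) * ρ
  have hyz : ∀ i, |y i - z i| ≤ ρ := fun i =>
    (abs_round_div_mul_sub_le hρ (z i)).trans (half_le_self hρ.le)
  refine ⟨y, hz.of_support_subset fun i hi hzi => hi (by simp [y, hzi]), fun i => ⟨_, rfl⟩, fun i => ?_, ?_⟩
  · calc |y i - dotp f (u i)| = |(y i - z i) - dotp r (u i)| := by
          rw [show dotp f (u i) = dotp r (u i) + z i from dotp_eq_dotp_residual_add hbi f z i]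
          congr 1; ring
      _ ≤ |y i - z i| + |dotp r (u i)| := abs_sub _ _
      _ ≤ ρ + l1Norm (u i) * E := add_le_add (hyz i) (abs_dotp_le_l1Norm_mul hr (u i))
      _ = l1Norm (u i) * E + ρ := add_comm _ _
  · have hsplit : (fun j => f j - ∑ i, y i * v i j) = r + fun j => ∑ i, (z i - y i) * v i j := by
      ext j
      simp only [r, Pi.add_apply, sub_mul, sum_sub_distrib]
      ring
    have hperturb : ∀ j, |∑ i, (z i - y i) * v i j| ≤ K * ρ * C := fun j =>
      abs_sum_mul_le_of_ncard_support_le (fun i => abs_sub_comm (z i) (y i) ▸ hyz i)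
        (fun i => hv i j) (hK j) hρ.le ((abs_nonneg _).trans (hv j j))
    rw [hsplit, mul_assoc, mul_assoc, ← mul_assoc (K : ℝ)]
    exact (lpNorm_add_le hp _ _).trans (add_le_add hE (lpNorm_le_of_forall_abs_le hp0 hperturb))
end

section
/- Let v_1, …, v_n ∈ ℝ^n, let 1 ≤ p < ∞, and assign to each i a level t_i ∈ ℕ with 2^{t_i} ≤ n and ‖v_i‖_p ≤ 2^{t_i/p}. Let ε > 0, E ≥ 0, B ≥ 1, and define ρ_t = εE/(2B·2^{t/p}) and ρ_root = εE/(2B·n^{1/p}). Let y* ∈ ℝ^n be B-sparse with ‖f − Σ_i y*_i v_i‖_p ≤ E, and let y^ρ ∈ ℝ^n satisfy |y^ρ_i − y*_i| ≤ ρ_{t_i} + ρ_root for every i and y^ρ_i = 0 whenever y*_i = 0. Then ‖f − Σ_i y^ρ_i v_i‖_p ≤ (1 + ε)·E. -/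
open Finset

section lpNorm

variable {n : ℕ} {p : ℝ}

lemma lpNorm_nonneg (x : Fin n → ℝ) : 0 ≤ lpNorm p x := by
  unfold lpNorm; positivity

lemma lpNorm_eq_norm_toLp (hp : 1 ≤ p) (x : Fin n → ℝ) :
    lpNorm p x = ‖WithLp.toLp (ENNReal.ofReal p) x‖ := by
  have hp0 : 0 < p := by linarith
  rw [PiLp.norm_eq_sum (by rwa [ENNReal.toReal_ofReal hp0.le]), ENNReal.toReal_ofReal hp0.le]
  simp [lpNorm, Real.norm_eq_abs]

lemma lpNorm_sum_mul_le (hp : 1 ≤ p) {ι : Type*} (s : Finset ι) (c : ι → ℝ)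
    (v : ι → Fin n → ℝ) :
    lpNorm p (fun j => ∑ i ∈ s, c i * v i j) ≤ ∑ i ∈ s, |c i| * lpNorm p (v i) := by
  have : Fact (1 ≤ ENNReal.ofReal p) := ⟨by simpa using hp⟩
  have hsum : (fun j => ∑ i ∈ s, c i * v i j) = ∑ i ∈ s, c i • v i := by
    ext j; simp
  simp only [lpNorm_eq_norm_toLp hp, hsum, WithLp.toLp_sum, WithLp.toLp_smul]
  refine (norm_sum_le _ _).trans (sum_le_sum fun i _ => ?_)
  rw [norm_smul, Real.norm_eq_abs]

end lpNorm

lemma Sparse.sum_le_mul {n B : ℕ} {y g : Fin n → ℝ} {q : ℝ} (hy : Sparse B y) (hq : 0 ≤ q)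
    (hg : ∀ i, g i ≤ q) (hg0 : ∀ i, y i = 0 → g i ≤ 0) : ∑ i, g i ≤ B * q := by
  have hcard : #{i | y i ≠ 0} ≤ B := by
    simpa [Sparse, ← Set.ncard_coe_finset, Finset.coe_filter] using hy
  calc ∑ i, g i ≤ ∑ i, if y i ≠ 0 then q else 0 :=
        sum_le_sum fun i _ => by split_ifs with h; exacts [hg i, hg0 i (not_not.mp h)]
    _ = #{i | y i ≠ 0} * q := by rw [sum_ite, sum_const_zero, add_zero, sum_const, nsmul_eq_mul]
    _ ≤ B * q := by gcongr

lemma two_rpow_div_le_rpow_one_div {n t : ℕ} {p : ℝ} (hp : 0 < p) (ht : 2 ^ t ≤ n) :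
    (2 : ℝ) ^ ((t : ℝ) / p) ≤ (n : ℝ) ^ (1 / p) := by
  rw [div_eq_mul_one_div (t : ℝ), Real.rpow_mul zero_le_two, Real.rpow_natCast]
  exact Real.rpow_le_rpow (by positivity) (by exact_mod_cast ht) (by positivity)

lemma abs_mul_le_of_abs_le_div_add_div {d w a c K M : ℝ} (hK : 0 ≤ K) (hM : 0 < M)
    (ha : 0 < a) (hac : a ≤ c) (hd : |d| ≤ K / (2 * M * a) + K / (2 * M * c))
    (hw0 : 0 ≤ w) (hw : w ≤ a) : |d| * w ≤ K / M := by
  have hc : 0 < c := ha.trans_le hac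
  have hca : K / (2 * M * c) * a ≤ K / (2 * M) := by
    rw [div_mul_eq_mul_div, div_le_div_iff₀ (by positivity) (by positivity)]
    nlinarith [mul_nonneg (mul_nonneg hK hM.le) (sub_nonneg.2 hac)]
  calc |d| * w ≤ (K / (2 * M * a) + K / (2 * M * c)) * a := mul_le_mul hd hw hw0 (by positivity)
    _ = K / (2 * M) + K / (2 * M * c) * a := by field_simp
    _ ≤ K / M := by linarith [show K / (2 * M) + K / (2 * M) = K / M by field_simp; ring]

/-- level-dependent rounding: let `v_1, …, v_n ∈ ℝ^n`, `1 ≤ p < ∞`,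
and assign to each `i` a level `t i` with `2^{t i} ≤ n` and `‖v_i‖_p ≤ 2^{t_i/p}`.
Let `ε > 0`, `E ≥ 0`, `B ≥ 1`, and set `ρ_t = εE/(2B·2^{t/p})`,
`ρ_root = εE/(2B·n^{1/p})`.  If `y*` is `B`-sparse with `‖f − Σ_i y*_i v_i‖_p ≤ E`
and `y^ρ` satisfies `|y^ρ_i − y*_i| ≤ ρ_{t_i} + ρ_root` for all `i`, with `y^ρ_i = 0`
whenever `y*_i = 0`, then `‖f − Σ_i y^ρ_i v_i‖_p ≤ (1 + ε)·E`. -/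
theorem stmt14 {n B : ℕ} (hB : 1 ≤ B)
    (v : Fin n → Fin n → ℝ) (p : ℝ) (hp : 1 ≤ p)
    (t : Fin n → ℕ) (ht : ∀ i, 2 ^ t i ≤ n)
    (hv : ∀ i, lpNorm p (v i) ≤ (2 : ℝ) ^ ((t i : ℝ) / p))
    (ε E : ℝ) (hε : 0 < ε) (hE : 0 ≤ E)
    (f ystar yρ : Fin n → ℝ)
    (hsp : Sparse B ystar)
    (herr : lpNorm p (fun j => f j - ∑ i, ystar i * v i j) ≤ E)
    (hround : ∀ i, |yρ i - ystar i| ≤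
      ε * E / (2 * B * (2 : ℝ) ^ ((t i : ℝ) / p)) +
        ε * E / (2 * B * (n : ℝ) ^ (1 / p)))
    (hzero : ∀ i, ystar i = 0 → yρ i = 0) :
    lpNorm p (fun j => f j - ∑ i, yρ i * v i j) ≤ (1 + ε) * E := by
  have hB0 : (0 : ℝ) < B := by exact_mod_cast hB
  have hdecomp : (fun j => f j - ∑ i, yρ i * v i j)
      = (fun j => f j - ∑ i, ystar i * v i j) + fun j => ∑ i, (ystar i - yρ i) * v i j := by
    ext j; simp only [Pi.add_apply, sub_mul, sum_sub_distrib]; ring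
  have hterm (i : Fin n) : |ystar i - yρ i| * lpNorm p (v i) ≤ ε * E / B := by
    refine abs_mul_le_of_abs_le_div_add_div (by positivity) hB0 (by positivity)
      (two_rpow_div_le_rpow_one_div (by linarith) (ht i)) ?_ (lpNorm_nonneg _) (hv i)
    rw [abs_sub_comm]; exact hround i
  have hperturb : lpNorm p (fun j => ∑ i, (ystar i - yρ i) * v i j) ≤ ε * E :=
    calc _ ≤ ∑ i, |ystar i - yρ i| * lpNorm p (v i) := lpNorm_sum_mul_le hp _ _ _
      _ ≤ B * (ε * E / B) := hsp.sum_le_mul (by positivity) hterm fun i h => by simp [h, hzero i h]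
      _ = ε * E := by field_simp
  rw [hdecomp]
  linarith [lpNorm_add_le hp (fun j => f j - ∑ i, ystar i * v i j)
    (fun j => ∑ i, (ystar i - yρ i) * v i j)]
end
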